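/- arXiv:2307.00547 — 6 statements merged into one kernel-verified Lean document; each statement's English description precedes it below -/
import Mathlib

section
/- The history-relied (HR) policy evaluation operator is a γ-contraction in the maximal p-Wasserstein metric: for history-based value distributions Z₁, Z₂ and any history-based policy π, d̄_p(T^π_h Z₁, T^π_h Z₂) ≤ γ d̄_p(Z₁, Z₂), where (T^π_h Z)(h_t, a) := R_{0:t} + γ^{t+1} Z({s_{t+1}}, A_{t+1}) with A_{t+1} ∼ π(·|h_{t+1}) and s_{t+1} = M(s_t, a). -/
open MeasureTheory

/-- Distributions over returns are represented by their quantile functions on `(0,1)`;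
the `p`-Wasserstein distance is the `L_p` distance between quantile functions. -/
noncomputable def dWp (p : ℝ) (U V : ℝ → ℝ) : ℝ :=
  (∫ ω in Set.Ioo (0:ℝ) 1, |U ω - V ω| ^ p) ^ (1 / p)

lemma dWp_nonneg (p : ℝ) (U V : ℝ → ℝ) : 0 ≤ dWp p U V := by
  apply Real.rpow_nonneg
  apply integral_nonneg
  intro ω
  exact Real.rpow_nonneg (abs_nonneg _) p

lemma dWp_const_add_smul (p : ℝ) (hp : 1 ≤ p) (c a : ℝ) (hc : 0 ≤ c) (U V : ℝ → ℝ) :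
    dWp p (fun ω => a + c * U ω) (fun ω => a + c * V ω) = c * dWp p U V := by
  have hp0 : p ≠ 0 := by positivity
  unfold dWp
  have h1 : ∀ ω, |a + c * U ω - (a + c * V ω)| ^ p = c ^ p * |U ω - V ω| ^ p := by
    intro ω
    have : a + c * U ω - (a + c * V ω) = c * (U ω - V ω) := by ring
    rw [this, abs_mul, abs_of_nonneg hc, Real.mul_rpow hc (abs_nonneg _)]
  simp_rw [h1]
  rw [integral_const_mul]
  have hI : 0 ≤ ∫ ω in Set.Ioo (0:ℝ) 1, |U ω - V ω| ^ p :=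
    integral_nonneg fun ω => Real.rpow_nonneg (abs_nonneg _) p
  rw [Real.mul_rpow (Real.rpow_nonneg hc p) hI, ← Real.rpow_mul hc, mul_one_div,
    div_self hp0, Real.rpow_one]

/-- the history-relied (HR) policy evaluation operator
`(T^π_h Z)(h_t,a) := R_{0:t} + γ^{t+1} Z({s_{t+1}}, π(h_{t+1}))`
is a γ-contraction in the maximal p-Wasserstein metric: if
`d_p(Z₁(h,a), Z₂(h,a)) ≤ C` for all `(h,a)` then the operator outputs are within
`γ·C` at every `(h,a)`, i.e. `d̄_p(T^π_h Z₁, T^π_h Z₂) ≤ γ d̄_p(Z₁, Z₂)`.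
Here `len h = t`, `Racc h a = R_{0:t}` is the realized accumulated discounted reward,
`sing h a = {s_{t+1}} = {M(s_t,a)}` the singleton history, `nextH h a = h_{t+1}`,
and `π` a deterministic history-based policy. -/
theorem hr_policy_evaluation_contraction
    {H A : Type} (p γ : ℝ) (hp : 1 ≤ p) (hγ0 : 0 ≤ γ) (hγ1 : γ < 1)
    (len : H → ℕ) (Racc : H → A → ℝ)
    (nextH : H → A → H) (sing : H → A → H) (π : H → A)
    (Z₁ Z₂ : H → A → (ℝ → ℝ)) (C : ℝ)
    (hbound : ∀ h a, dWp p (Z₁ h a) (Z₂ h a) ≤ C) :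
    ∀ h a,
      dWp p
        (fun ω => Racc h a + γ ^ (len h + 1) * Z₁ (sing h a) (π (nextH h a)) ω)
        (fun ω => Racc h a + γ ^ (len h + 1) * Z₂ (sing h a) (π (nextH h a)) ω)
      ≤ γ * C := by
  intro h a
  rw [dWp_const_add_smul p hp _ _ (pow_nonneg hγ0 _)]
  have hd0 : 0 ≤ dWp p (Z₁ (sing h a) (π (nextH h a))) (Z₂ (sing h a) (π (nextH h a))) :=
    dWp_nonneg _ _ _
  have hγpow : γ ^ (len h + 1) ≤ γ := by
    calc γ ^ (len h + 1) = γ * γ ^ (len h) := by ring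
    _ ≤ γ * 1 := by
        exact mul_le_mul_of_nonneg_left (pow_le_one₀ hγ0 hγ1.le) hγ0
    _ = γ := mul_one γ
  exact mul_le_mul hγpow (hbound _ _) hd0 hγ0
end

section
/- Policy improvement for the history-relied optimality operator: let π be a deterministic history-based policy with history-action value distribution Z^π, and let β be a distortion risk measure. Define π′(h) ∈ argmax_{a} β[Z^π(h, a)]. Then for every history h_t, β[Z^π(h_t, π(h_t))] ≤ β[Z^{π′}(h_t, π′(h_t))]. -/
/-- policy improvement for the history-relied optimality operator.
Setting: episodic deterministic-transition MDP with horizon `T` (episodes end after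
the action at a history of length `T`); `len h` is the timestep of history `h`;
`nextH h a = h ∪ {a, M(s_t,a)}` is the successor history.  For a deterministic
history-based policy `π`, `Vβ π h a = β[Z^π(h,a)]` denotes the distortion risk
measure of its trajectory-return distribution, which satisfies the unfolding
identity `β[Z^π(h_t,a)] = β[Z^π(h̃_{t+1}, π(h̃_{t+1}))]` (hypothesis `hunfold`,
since `Z^π(h_t,a)` and `Z^π(nextH h a, π (nextH h a))` are the same random return),
and at terminal histories all policies have the same return (`hterm`).
If `π'(h) ∈ argmax_a β[Z^π(h,a)]` (hypothesis `hgreedy`), then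
`β[Z^π(h, π(h))] ≤ β[Z^{π'}(h, π'(h))]` for every history `h`. -/
theorem hr_policy_improvement
    {H A : Type} [Fintype A] [Nonempty A]
    (T : ℕ) (len : H → ℕ) (hlen : ∀ h, len h ≤ T)
    (nextH : H → A → H)
    (hnext : ∀ h a, len h < T → len (nextH h a) = len h + 1)
    (Vβ : (H → A) → H → A → ℝ)
    (hunfold : ∀ (π : H → A) (h : H) (a : A), len h < T →
      Vβ π h a = Vβ π (nextH h a) (π (nextH h a)))
    (hterm : ∀ (π π' : H → A) (h : H) (a : A), len h = T → Vβ π h a = Vβ π' h a)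
    (π π' : H → A)
    (hgreedy : ∀ h a, Vβ π h a ≤ Vβ π h (π' h)) :
    ∀ h, Vβ π h (π h) ≤ Vβ π' h (π' h) := by
  have key : ∀ n h a, T - len h ≤ n → Vβ π h a ≤ Vβ π' h a := by
    intro n
    induction n with
    | zero =>
      intro h a hb
      have : len h = T := le_antisymm (hlen h) (by omega)
      exact le_of_eq (hterm π π' h a this)
    | succ n ih =>
      intro h a hb
      rcases eq_or_lt_of_le (hlen h) with heq | hlt
      · exact le_of_eq (hterm π π' h a heq)
      · have hnh : len (nextH h a) = len h + 1 := hnext h a hlt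
        calc Vβ π h a = Vβ π (nextH h a) (π (nextH h a)) := hunfold π h a hlt
          _ ≤ Vβ π (nextH h a) (π' (nextH h a)) := hgreedy _ _
          _ ≤ Vβ π' (nextH h a) (π' (nextH h a)) := ih _ _ (by omega)
          _ = Vβ π' h a := (hunfold π' h a hlt).symm
  intro h
  exact le_trans (hgreedy h (π h)) (key (T - len h) h (π' h) le_rfl)
end

section
/- Nonexpansiveness of the risk-sensitive HR optimality operator: for any distortion risk measure β that is translation-equivariant and positively homogeneous, and any history-based value distributions Z₁, Z₂, ‖β[T*_{h,β} Z₁] − β[T*_{h,β} Z₂]‖_∞ ≤ ‖β[Z₁] − β[Z₂]‖_∞, where (T*_{h,β} Z)(h_t,a) = R_{0:t} + γ^{t+1} Z({s_{t+1}}, argmax_{a'} β[Z(h_{t+1},a')]) and ‖f‖_∞ = sup_{h,a}|f(h,a)|. -/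
/-- nonexpansiveness of the risk-sensitive HR optimality operator.
`D` is the space of return distributions, `β` a distortion risk measure that is
translation-equivariant (`β[c + X] = c + β[X]` for deterministic `c`, via `addC`) and
positively homogeneous (`β[λX] = λβ[X]` for `λ ≥ 0`, via `smulC`).  The operator is
`(T*_{h,β} Z)(h_t,a) = R_{0:t} + γ^{t+1} Z({s_{t+1}}, argmax_{a'} β[Z(·,a')])`, whose
β-value is `max_{a'} β[R_{0:t} + γ^{t+1} Z({s_{t+1}},a')]` (rewards along the realized
history are deterministic, `Racc h a = R_{0:t}`; `sing h a = {s_{t+1}}`; `len h = t`).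
Then `‖β[T*_{h,β}Z₁] - β[T*_{h,β}Z₂]‖_∞ ≤ ‖β[Z₁] - β[Z₂]‖_∞`: any uniform bound `C`
on `|β[Z₁] - β[Z₂]|` bounds the difference of the operator's β-values everywhere. -/
theorem hr_optimality_operator_nonexpansive
    {H A : Type} [Fintype A] [Nonempty A] {D : Type}
    (β : D → ℝ) (addC : ℝ → D → D) (smulC : ℝ → D → D)
    (hβadd : ∀ (c : ℝ) (X : D), β (addC c X) = c + β X)
    (hβsmul : ∀ (lam : ℝ) (X : D), 0 ≤ lam → β (smulC lam X) = lam * β X)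
    (γ : ℝ) (hγ0 : 0 ≤ γ) (hγ1 : γ < 1)
    (len : H → ℕ) (Racc : H → A → ℝ) (sing : H → A → H)
    (Z₁ Z₂ : H → A → D) (C : ℝ)
    (hbound : ∀ h a, |β (Z₁ h a) - β (Z₂ h a)| ≤ C) :
    ∀ h a,
      |(Finset.univ.sup' Finset.univ_nonempty fun a' =>
          β (addC (Racc h a) (smulC (γ ^ (len h + 1)) (Z₁ (sing h a) a')))) -
       (Finset.univ.sup' Finset.univ_nonempty fun a' =>
          β (addC (Racc h a) (smulC (γ ^ (len h + 1)) (Z₂ (sing h a) a'))))| ≤ C := by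
  intro h a
  have hγp : (0:ℝ) ≤ γ ^ (len h + 1) := pow_nonneg hγ0 _
  have hγle : γ ^ (len h + 1) ≤ 1 := pow_le_one₀ hγ0 hγ1.le
  have key : ∀ a', |β (addC (Racc h a) (smulC (γ ^ (len h + 1)) (Z₁ (sing h a) a'))) -
      β (addC (Racc h a) (smulC (γ ^ (len h + 1)) (Z₂ (sing h a) a')))| ≤ C := by
    intro a'
    rw [hβadd, hβadd, hβsmul _ _ hγp, hβsmul _ _ hγp]
    have : Racc h a + γ ^ (len h + 1) * β (Z₁ (sing h a) a') -
        (Racc h a + γ ^ (len h + 1) * β (Z₂ (sing h a) a')) =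
        γ ^ (len h + 1) * (β (Z₁ (sing h a) a') - β (Z₂ (sing h a) a')) := by ring
    rw [this, abs_mul, abs_of_nonneg hγp]
    calc γ ^ (len h + 1) * |β (Z₁ (sing h a) a') - β (Z₂ (sing h a) a')|
        ≤ |β (Z₁ (sing h a) a') - β (Z₂ (sing h a) a')| :=
          mul_le_of_le_one_left (abs_nonneg _) hγle
      _ ≤ C := hbound _ _
  set f := fun a' => β (addC (Racc h a) (smulC (γ ^ (len h + 1)) (Z₁ (sing h a) a')))
  set g := fun a' => β (addC (Racc h a) (smulC (γ ^ (len h + 1)) (Z₂ (sing h a) a')))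
  rw [abs_sub_le_iff]
  constructor
  · rw [sub_le_iff_le_add]
    refine Finset.sup'_le _ _ fun a' _ => ?_
    calc f a' ≤ g a' + C := by have := key a'; rw [abs_sub_le_iff] at this; linarith [this.1]
      _ ≤ C + Finset.univ.sup' Finset.univ_nonempty g := by
          linarith [Finset.le_sup' g (Finset.mem_univ a')]
  · rw [sub_le_iff_le_add]
    refine Finset.sup'_le _ _ fun a' _ => ?_
    calc g a' ≤ f a' + C := by have := key a'; rw [abs_sub_le_iff] at this; linarith [this.2]
      _ ≤ C + Finset.univ.sup' Finset.univ_nonempty f := by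
          linarith [Finset.le_sup' f (Finset.mem_univ a')]
end

section
/- Counterexample showing the risk-sensitive Bellman optimality operator is not a contraction for CVaR: there exists a 3-state deterministic-transition MDP with binary actions, reward distributions as specified, and value distributions Z₁ = Z₂ (so ‖β[Z₁]−β[Z₂]‖_∞ = 0), such that two valid one-step applications of the risk-sensitive Bellman optimality operator T*_β with β = CVaR_{0.1} (each using a different maximizer when the argmax over β-values is non-unique) produce Z₁′, Z₂′ with ‖β[Z₁′]−β[Z₂′]‖_∞ = 99 > 0. Hence T*_β admits no Lipschitz contraction bound in the sup-metric on β-values. -/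
open MeasureTheory

/-- Quantile function of a distribution `μ` on ℝ. -/
noncomputable def qf (μ : Measure ℝ) (τ : ℝ) : ℝ :=
  sInf {x : ℝ | τ ≤ (μ (Set.Iic x)).toReal}

/-- Lower-tail conditional value-at-risk `CVaR_η[X] = (1/η) ∫₀^η F_X^{-1}`. -/
noncomputable def cvar (η : ℝ) (μ : Measure ℝ) : ℝ :=
  (1 / η) * ∫ τ in Set.Ioo (0:ℝ) η, qf μ τ

/-!
At `s₁` both actions have CVaR₀.₁ equal to `-10`, so either may be chosen greedily, but the two
resulting updates at `(s₀, a₀)` have different lower 10% tails. On levels in the band of an atom the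
quantile function is constant, so CVaR is the mass-weighted average of the atoms in the tail:
`R + δ₋₁₀` has its whole tail on the atom `-20`, whereas `R + R` has mass `1/100` at `-20` and the
remaining `9/100` of the tail at `90`, giving `(-20/100 + 90 · 9/100) · 10 = 79`.
-/

open Set Measure
open scoped ENNReal

section Quantile

variable {μ : Measure ℝ}

theorem qf_eq_of_measureReal_Iio_lt_of_le_measureReal_Iic [IsFiniteMeasure μ] {τ m : ℝ}
    (hlt : μ.real (Iio m) < τ) (hle : τ ≤ μ.real (Iic m)) : qf μ τ = m := by
  have hset : {x : ℝ | τ ≤ (μ (Iic x)).toReal} = Ici m := by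
    ext x
    simp only [mem_ofPred_eq, mem_Ici, ← measureReal_def]
    refine ⟨fun h => ?_, fun hx => hle.trans (measureReal_mono (Iic_subset_Iic.2 hx))⟩
    by_contra! hx
    exact (h.trans (measureReal_mono (Iic_subset_Iio.2 hx))).not_gt hlt
  rw [qf, hset, csInf_Ici]

theorem cvar_eq_of_eqOn_Ioo {η c : ℝ} (hη : 0 < η) (h : EqOn (qf μ) (fun _ => c) (Ioo 0 η)) :
    cvar η μ = c := by
  rw [cvar, setIntegral_congr_fun measurableSet_Ioo h, setIntegral_const,
    Real.volume_real_Ioo_of_le hη.le, smul_eq_mul, sub_zero]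
  field_simp

theorem cvar_eq_of_eqOn_Ioc_of_eqOn_Ioo {η t a b : ℝ} (ht : 0 < t) (htη : t < η)
    (ha : EqOn (qf μ) (fun _ => a) (Ioc 0 t)) (hb : EqOn (qf μ) (fun _ => b) (Ioo t η)) :
    cvar η μ = (t * a + (η - t) * b) / η := by
  have hdisj : Disjoint (Ioc 0 t) (Ioo t η) :=
    disjoint_left.2 fun τ hτ₁ hτ₂ => hτ₂.1.not_ge hτ₁.2
  have hint_a : IntegrableOn (qf μ) (Ioc 0 t) :=
    (integrableOn_const measure_Ioc_lt_top.ne).congr_fun (fun τ hτ => (ha hτ).symm)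
      measurableSet_Ioc
  have hint_b : IntegrableOn (qf μ) (Ioo t η) :=
    (integrableOn_const measure_Ioo_lt_top.ne).congr_fun (fun τ hτ => (hb hτ).symm)
      measurableSet_Ioo
  rw [cvar, ← Ioc_union_Ioo_eq_Ioo ht.le htη,
    setIntegral_union hdisj measurableSet_Ioo hint_a hint_b,
    setIntegral_congr_fun measurableSet_Ioc ha, setIntegral_congr_fun measurableSet_Ioo hb,
    setIntegral_const, setIntegral_const, Real.volume_real_Ioc_of_le ht.le,
    Real.volume_real_Ioo_of_le htη.le, smul_eq_mul, smul_eq_mul, sub_zero, one_div_mul_eq_div]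

theorem cvar_eq_of_tail_atom [IsFiniteMeasure μ] {η m : ℝ} (hη : 0 < η)
    (h₀ : μ.real (Iio m) = 0) (hm : η ≤ μ.real (Iic m)) : cvar η μ = m :=
  cvar_eq_of_eqOn_Ioo hη fun _ hτ =>
    qf_eq_of_measureReal_Iio_lt_of_le_measureReal_Iic (h₀ ▸ hτ.1) (hτ.2.le.trans hm)

theorem cvar_eq_of_tail_two_atoms [IsFiniteMeasure μ] {η t a b : ℝ} (ht : 0 < t) (htη : t < η)
    (h₀ : μ.real (Iio a) = 0) (ha : t ≤ μ.real (Iic a)) (hb : μ.real (Iio b) ≤ t)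
    (hη : η ≤ μ.real (Iic b)) : cvar η μ = (t * a + (η - t) * b) / η :=
  cvar_eq_of_eqOn_Ioc_of_eqOn_Ioo ht htη
    (fun _ hτ => qf_eq_of_measureReal_Iio_lt_of_le_measureReal_Iic (h₀ ▸ hτ.1) (hτ.2.trans ha))
    (fun _ hτ => qf_eq_of_measureReal_Iio_lt_of_le_measureReal_Iic (hb.trans_lt hτ.1)
      (hτ.2.le.trans hη))

theorem cvar_dirac {η : ℝ} (x : ℝ) (hη₀ : 0 < η) (hη₁ : η ≤ 1) : cvar η (dirac x) = x :=
  cvar_eq_of_tail_atom hη₀ (by simp [measureReal_def])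
    (by simpa [measureReal_def] using hη₁)

end Quantile

noncomputable def riskyDist : Measure ℝ :=
  (9/10 : ℝ≥0∞) • dirac 100 + (1/10 : ℝ≥0∞) • dirac (-10)

instance : IsProbabilityMeasure riskyDist := by
  refine ⟨?_⟩
  simp only [riskyDist, add_apply, Measure.smul_apply, measure_univ, smul_eq_mul, mul_one]
  rw [ENNReal.div_add_div_same]
  norm_num [ENNReal.div_self]

theorem cvar_riskyDist : cvar (1/10) riskyDist = -10 :=
  cvar_eq_of_tail_atom (by norm_num) (by norm_num [riskyDist, measureReal_def])
    (by norm_num [riskyDist, measureReal_def, indicator_apply])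

theorem cvar_riskyDist_conv_dirac : cvar (1/10) (riskyDist ∗ dirac (-10)) = -20 := by
  refine cvar_eq_of_tail_atom (by norm_num) ?_ ?_ <;>
    norm_num [riskyDist, add_conv, conv_smul_left, measureReal_def, indicator_apply]

theorem cvar_riskyDist_conv_riskyDist : cvar (1/10) (riskyDist ∗ riskyDist) = 79 := by
  -- atoms at -20, 90, 200 with masses 1/100, 18/100, 81/100
  refine (cvar_eq_of_tail_two_atoms (t := 1/100) (a := -20) (b := 90) (by norm_num) (by norm_num)
    ?_ ?_ ?_ ?_).trans (by norm_num) <;>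
    norm_num [riskyDist, conv_add, add_conv, conv_smul_left, conv_smul_right, measureReal_def,
      indicator_apply]
  simp (disch := finiteness) [ENNReal.toReal_add, ENNReal.toReal_mul, ENNReal.toReal_div,
    ENNReal.toReal_inv]
  norm_num

/-- counterexample showing the risk-sensitive Bellman optimality
operator is not a contraction for β = CVaR₀.₁.  In the 3-state deterministic MDP
(γ = 1): `R(s₀,a₀) = {100 w.p. 0.9; −10 w.p. 0.1}`, and the common value distribution
`Z₁ = Z₂` has `Z(s₁,a₀) = {100 w.p. 0.9; −10 w.p. 0.1}` and `Z(s₁,a₁) = δ_{−10}`.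
Both actions at `s₁` are greedy (`CVaR = −10` each, so `‖β[Z₁]−β[Z₂]‖_∞ = 0` and the
argmax is non-unique); one valid update gives `Z₁'(s₀,a₀) = R(s₀,a₀) + Z(s₁,a₀)`
(the independent sum, via the product measure) with `CVaR = 79`, the other gives
`Z₂'(s₀,a₀) = R(s₀,a₀) + Z(s₁,a₁)` with `CVaR = −20`; hence the β-values after one
application differ by `99 > 0`, refuting any Lipschitz contraction bound. -/
theorem cvar_bellman_optimality_not_contraction :
    let μR : Measure ℝ :=
      (9/10 : ENNReal) • Measure.dirac 100 + (1/10 : ENNReal) • Measure.dirac (-10)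
    let Zs₁a₀ : Measure ℝ :=
      (9/10 : ENNReal) • Measure.dirac 100 + (1/10 : ENNReal) • Measure.dirac (-10)
    let Zs₁a₁ : Measure ℝ := Measure.dirac (-10)
    let Z₁' : Measure ℝ := Measure.map (fun q : ℝ × ℝ => q.1 + q.2) (μR.prod Zs₁a₀)
    let Z₂' : Measure ℝ := Measure.map (fun q : ℝ × ℝ => q.1 + q.2) (μR.prod Zs₁a₁)
    cvar (1/10) Zs₁a₀ = -10 ∧ cvar (1/10) Zs₁a₁ = -10 ∧
    cvar (1/10) Z₁' = 79 ∧ cvar (1/10) Z₂' = -20 ∧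
    |cvar (1/10) Z₁' - cvar (1/10) Z₂'| = 99 ∧ (0:ℝ) < 99 := by
  intro μR Zs₁a₀ Zs₁a₁ Z₁' Z₂'
  -- `μ ∗ ν` unfolds to the pushforward of `μ.prod ν` under addition
  have h₁ : cvar (1/10) Z₁' = 79 := cvar_riskyDist_conv_riskyDist
  have h₂ : cvar (1/10) Z₂' = -20 := cvar_riskyDist_conv_dirac
  refine ⟨cvar_riskyDist, cvar_dirac _ (by norm_num) (by norm_num), h₁, h₂, ?_, by norm_num⟩
  rw [h₁, h₂]
  norm_num
end

section
/- Sufficiency of the HR optimality equation (backward induction): in an episodic deterministic-transition MDP terminating at step T+1, if a value distribution Z* and deterministic policy π* satisfy β[Z*(h_t,a)] = β[R_{0:t} + γ^{t+1} Z*({s_{t+1}}, a*_{t+1})] with a*_{t+1} ∈ argmax_a β[Z*(h_{t+1},a)] for all t < T, and Z*(h_T, a) = R_{0:T} (terminal condition), then β[Z*(h_t, a)] = β[Z^{π*}(h_t, a)] for all histories h_t and actions a, i.e., Z* has the correct risk values of the greedy policy π*. -/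
/-- sufficiency of the HR optimality equation via backward induction.
Episodic deterministic-transition MDP terminating after the action at histories of
length `T` (`len h = t`, successor histories via `nextH`).  `Vstar h a = β[Z*(h,a)]`
are the risk values of a value distribution `Z*` and `πstar` a deterministic greedy
policy with respect to them (`hgreedy`).  If `Z*` satisfies the HR optimality
equation `β[Z*(h_t,a)] = β[R_{0:t} + γ^{t+1} Z*({s_{t+1}}, a*_{t+1})]`
`= β[Z*(h_{t+1}, a*_{t+1})]` with `a*_{t+1} = πstar(h_{t+1})` (hypothesis `hopt`),
where `Vpi h a = β[Z^{π*}(h,a)]` are the risk values of the greedy policy itself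
(satisfying the analogous unfolding `hπ`), and the two agree at terminal histories
(`hterm`: there `Z*(h_T,a) = R_{0:T} = Z^{π*}(h_T,a)`), then
`β[Z*(h,a)] = β[Z^{π*}(h,a)]` for all histories and actions. -/
theorem hr_optimality_equation_sufficient
    {H A : Type} [Fintype A] [Nonempty A]
    (T : ℕ) (len : H → ℕ) (hlen : ∀ h, len h ≤ T)
    (nextH : H → A → H)
    (hnext : ∀ h a, len h < T → len (nextH h a) = len h + 1)
    (πstar : H → A) (Vstar Vpi : H → A → ℝ)
    (hgreedy : ∀ h a, Vstar h a ≤ Vstar h (πstar h))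
    (hopt : ∀ h a, len h < T → Vstar h a = Vstar (nextH h a) (πstar (nextH h a)))
    (hπ : ∀ h a, len h < T → Vpi h a = Vpi (nextH h a) (πstar (nextH h a)))
    (hterm : ∀ h a, len h = T → Vstar h a = Vpi h a) :
    ∀ h a, Vstar h a = Vpi h a := by
  suffices key : ∀ k h a, T - len h ≤ k → Vstar h a = Vpi h a by
    intro h a; exact key (T - len h) h a le_rfl
  intro k
  induction k with
  | zero =>
    intro h a hk
    exact hterm h a (le_antisymm (hlen h) (Nat.le_of_sub_eq_zero (Nat.le_zero.mp hk)))
  | succ n ih =>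
    intro h a hk
    rcases eq_or_lt_of_le (hlen h) with heq | hlt
    · exact hterm h a heq
    · rw [hopt h a hlt, hπ h a hlt]
      apply ih
      rw [hnext h a hlt]
      omega
end

section
/- If a sequence of value-distribution/policy pairs (Z_k, π_k) is generated by repeatedly applying the greedy policy improvement of the HR optimality operator, then the sequence of risk values β[Z^{π_k}(h, π_k(h))] is nondecreasing in k for every history h, and on a finite history and action space it stabilizes after finitely many steps at a policy satisfying the risk-sensitive HR optimality equation. -/
/-!
Greedy improvement never lowers the risk value of any state-action pair: unfolding the
deterministic transition from `h` down to the horizon, each step swaps the old action for the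
greedy one (no loss, by greediness) and then the old continuation for the new one (no loss, by
induction on the remaining horizon). The values `h ↦ β[Z^{π_k}(h, π_k h)]` therefore increase
monotonically in `k`; as they depend only on the policy `π_k`, of which there are finitely many,
they are eventually constant, and once `π_{k+1}` no longer improves on `π_k`, greediness of
`π_{k+1}` with respect to `π_k` is exactly the optimality equation for `π_k`.
-/

theorem Monotone.exists_forall_ge_eq_of_finite_range {α : Type*} [PartialOrder α]
    {f : ℕ → α} (hf : Monotone f) (hfin : (Set.range f).Finite) :
    ∃ K, ∀ k, K ≤ k → f k = f K := by
  obtain ⟨_, ⟨K, rfl⟩, hmax⟩ := hfin.exists_maximal ⟨f 0, 0, rfl⟩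
  exact ⟨K, fun k hk => (hmax ⟨k, rfl⟩ (hf hk)).antisymm (hf hk)⟩

theorem riskValue_le_of_greedy {H A : Type*} (T : ℕ) (len : H → ℕ) (hlen : ∀ h, len h ≤ T)
    (nextH : H → A → H) (hnext : ∀ h a, len h < T → len (nextH h a) = len h + 1)
    (Vβ : (H → A) → H → A → ℝ)
    (hunfold : ∀ (π : H → A) (h : H) (a : A), len h < T →
      Vβ π h a = Vβ π (nextH h a) (π (nextH h a)))
    (hterm : ∀ (π π' : H → A) (h : H) (a : A), len h = T → Vβ π h a = Vβ π' h a)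
    {π π' : H → A} (hπ' : ∀ h a, Vβ π h a ≤ Vβ π h (π' h)) (h : H) (a : A) :
    Vβ π h a ≤ Vβ π' h a := by
  induction hn : T - len h generalizing h a with
  | zero => exact (hterm π π' h a (by have := hlen h; omega)).le
  | succ n ih =>
    have hlt : len h < T := by omega
    have hn' : T - len (nextH h a) = n := by rw [hnext h a hlt]; omega
    rw [hunfold π h a hlt, hunfold π' h a hlt]
    exact (hπ' _ _).trans (ih _ _ hn')

theorem hr_policy_iteration_monotone_and_stabilizes_general
    {H A : Type} [Fintype H] [Fintype A]
    (T : ℕ) (len : H → ℕ) (hlen : ∀ h, len h ≤ T)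
    (nextH : H → A → H)
    (hnext : ∀ h a, len h < T → len (nextH h a) = len h + 1)
    (Vβ : (H → A) → H → A → ℝ)
    (hunfold : ∀ (π : H → A) (h : H) (a : A), len h < T →
      Vβ π h a = Vβ π (nextH h a) (π (nextH h a)))
    (hterm : ∀ (π π' : H → A) (h : H) (a : A), len h = T → Vβ π h a = Vβ π' h a)
    (πseq : ℕ → H → A)
    (hgreedy : ∀ k h a, Vβ (πseq k) h a ≤ Vβ (πseq k) h (πseq (k+1) h)) :
    (∀ h, Monotone fun k => Vβ (πseq k) h (πseq k h)) ∧
    ∃ K : ℕ, (∀ k, K ≤ k → ∀ h,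
        Vβ (πseq k) h (πseq k h) = Vβ (πseq K) h (πseq K h)) ∧
      ∀ h a, Vβ (πseq K) h a ≤ Vβ (πseq K) h (πseq K h) := by
  have improve k := riskValue_le_of_greedy T len hlen nextH hnext Vβ hunfold hterm (hgreedy k)
  have greedy_le_succ : ∀ k h a, Vβ (πseq k) h a ≤ Vβ (πseq (k+1)) h (πseq (k+1) h) :=
    fun k h a => (hgreedy k h a).trans (improve k h _)
  let value : (H → A) → H → ℝ := fun π h => Vβ π h (π h)
  have mono : Monotone (value ∘ πseq) :=
    monotone_nat_of_le_succ fun k h => greedy_le_succ k h _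
  obtain ⟨K, hK⟩ := mono.exists_forall_ge_eq_of_finite_range
    ((Set.finite_range value).subset (Set.range_comp_subset_range πseq value))
  refine ⟨fun h _ _ hkl => mono hkl h, K, fun k hk h => congrFun (hK k hk) h, fun h a => ?_⟩
  calc Vβ (πseq K) h a ≤ value (πseq (K+1)) h := greedy_le_succ K h a
    _ = value (πseq K) h := congrFun (hK _ K.le_succ) h

/-- greedy HR policy iteration is monotone and stabilizes.  Episodic
deterministic-transition MDP with finite history space `H` and finite action space
`A`; `Vβ π h a = β[Z^π(h,a)]` is the exact risk evaluation of the deterministic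
history-based policy `π`, satisfying the unfolding identity (`hunfold`) and
policy-independence at terminal histories (`hterm`).  The sequence `πseq` is
generated by greedy improvement: `πseq (k+1) h ∈ argmax_a β[Z^{πseq k}(h,a)]`
(hypothesis `hgreedy`).  Then the risk values `β[Z^{π_k}(h, π_k(h))]` are
nondecreasing in `k` for every history `h`, and after finitely many steps they
stabilize at a policy satisfying the risk-sensitive HR optimality equation, i.e. a
policy greedy with respect to its own risk values. -/
theorem hr_policy_iteration_monotone_and_stabilizes
    {H A : Type} [Fintype H] [Fintype A] [Nonempty A]
    (T : ℕ) (len : H → ℕ) (hlen : ∀ h, len h ≤ T)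
    (nextH : H → A → H)
    (hnext : ∀ h a, len h < T → len (nextH h a) = len h + 1)
    (Vβ : (H → A) → H → A → ℝ)
    (hunfold : ∀ (π : H → A) (h : H) (a : A), len h < T →
      Vβ π h a = Vβ π (nextH h a) (π (nextH h a)))
    (hterm : ∀ (π π' : H → A) (h : H) (a : A), len h = T → Vβ π h a = Vβ π' h a)
    (πseq : ℕ → H → A)
    (hgreedy : ∀ k h a, Vβ (πseq k) h a ≤ Vβ (πseq k) h (πseq (k+1) h)) :
    (∀ h, Monotone fun k => Vβ (πseq k) h (πseq k h)) ∧
    ∃ K : ℕ, (∀ k, K ≤ k → ∀ h,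
        Vβ (πseq k) h (πseq k h) = Vβ (πseq K) h (πseq K h)) ∧
      ∀ h a, Vβ (πseq K) h a ≤ Vβ (πseq K) h (πseq K h) :=
  hr_policy_iteration_monotone_and_stabilizes_general T len hlen nextH hnext Vβ hunfold hterm πseq
    hgreedy
end
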